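/- Suppose $(\alpha,\beta)$ is a Bailey pair relative to $a$. Then for any nonnegative integer $M$ and any parameters $\rho_1,\rho_2$, $\sum_{L=0}^M \frac{(\rho_1)_L(\rho_2)_L(aq/\rho_1\rho_2)^L}{(aq/\rho_1)_L(aq/\rho_2)_L} \cdot \frac{\alpha_L}{(q)_{M-L}(aq)_{M+L}} = \sum_{L=0}^M \frac{(\rho_1)_L(\rho_2)_L(aq/\rho_1\rho_2)^L (aq/\rho_1\rho_2)_{M-L}}{(aq/\rho_1)_M(aq/\rho_2)_M(q)_{M-L}} \beta_L$. -/

import Mathlib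

open Finset

/-- The $q$-Pochhammer symbol $(x;q)_n$. -/
noncomputable def qp (q x : ℂ) (n : ℕ) : ℂ := ∏ k ∈ Finset.range n, (1 - x * q ^ k)

/-!
Substituting the Bailey pair relation into the right-hand side and interchanging the two
summations, the coefficient of `α i` becomes a terminating balanced ₃φ₂ sum: the
q-Pfaff–Saalschütz sum with parameters `x = ρ₁ qⁱ`, `y = ρ₂ qⁱ`, `z = aq/(ρ₁ρ₂)`, whose value
is exactly the coefficient of `α i` on the left-hand side.

The q-Pfaff–Saalschütz formula is proved by induction on its length `κ` through a WZ pair: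
with the certificate `saalschutzCert`, the combination
`(1 - q^(κ+1))(1 - zxy q^κ) T(κ+1, j) - (1 - zx q^κ)(1 - zy q^κ) T(κ, j)`
telescopes in `j`, so the sums satisfy the same first-order recurrence as the closed form.
-/

@[simp] lemma qp_zero (q x : ℂ) : qp q x 0 = 1 := prod_range_zero _

lemma qp_succ (q x : ℂ) (n : ℕ) : qp q x (n + 1) = qp q x n * (1 - x * q ^ n) :=
  prod_range_succ _ _

lemma qp_add (q x : ℂ) (m n : ℕ) : qp q x (m + n) = qp q x m * qp q (x * q ^ m) n := by
  simp only [qp, prod_range_add, pow_add, mul_assoc]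

lemma one_sub_mul_pow_ne_zero_of_qp_ne_zero {q x : ℂ} (h : ∀ n, qp q x n ≠ 0) (n : ℕ) :
    1 - x * q ^ n ≠ 0 :=
  right_ne_zero_of_mul (qp_succ q x n ▸ h (n + 1))

lemma qp_mul_pow_ne_zero {q x : ℂ} (h : ∀ n, qp q x n ≠ 0) (m n : ℕ) : qp q (x * q ^ m) n ≠ 0 :=
  right_ne_zero_of_mul (qp_add q x m n ▸ h (m + n))

section Saalschutz

variable {q x y z : ℂ}

/-- The balancing condition is built in: the lower parameter `a q` of the ₃φ₂ is `z * x * y`. -/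
noncomputable def saalschutzTerm (q x y z : ℂ) (κ j : ℕ) : ℂ :=
  qp q x j * qp q y j * z ^ j * qp q z (κ - j) /
    (qp q q (κ - j) * qp q q j * qp q (z * x * y) j)

noncomputable def saalschutzCert (q x y z : ℂ) (κ : ℕ) : ℕ → ℂ
  | 0 => 0
  | j + 1 => -(z * q ^ (κ - j) * (1 - x * q ^ j) * (1 - y * q ^ j)) * saalschutzTerm q x y z κ j

lemma saalschutzTerm_succ_left (hq : ∀ n, qp q q n ≠ 0) {κ j : ℕ} (hj : j ≤ κ) :
    saalschutzTerm q x y z (κ + 1) j * (1 - q * q ^ (κ - j)) =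
      (1 - z * q ^ (κ - j)) * saalschutzTerm q x y z κ j := by
  have hne := one_sub_mul_pow_ne_zero_of_qp_ne_zero hq (κ - j)
  have hterm : saalschutzTerm q x y z (κ + 1) j =
      (1 - z * q ^ (κ - j)) / (1 - q * q ^ (κ - j)) * saalschutzTerm q x y z κ j := by
    rw [saalschutzTerm, saalschutzTerm, div_mul_div_comm, Nat.sub_add_comm hj, qp_succ, qp_succ]
    congr 1 <;> ring
  rw [hterm, mul_right_comm, div_mul_cancel₀ _ hne]

lemma saalschutzTerm_succ_succ (hq : ∀ n, qp q q n ≠ 0) (hb : ∀ n, qp q (z * x * y) n ≠ 0)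
    (κ m : ℕ) :
    saalschutzTerm q x y z (κ + 1) (m + 1) * ((1 - q * q ^ m) * (1 - z * x * y * q ^ m)) =
      z * (1 - x * q ^ m) * (1 - y * q ^ m) * saalschutzTerm q x y z κ m := by
  have hne₁ := one_sub_mul_pow_ne_zero_of_qp_ne_zero hq m
  have hne₂ := one_sub_mul_pow_ne_zero_of_qp_ne_zero hb m
  have hterm : saalschutzTerm q x y z (κ + 1) (m + 1) =
      z * (1 - x * q ^ m) * (1 - y * q ^ m) / ((1 - q * q ^ m) * (1 - z * x * y * q ^ m)) *
        saalschutzTerm q x y z κ m := by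
    rw [saalschutzTerm, saalschutzTerm, div_mul_div_comm, Nat.add_sub_add_right]
    simp only [qp_succ, pow_succ]
    congr 1 <;> ring
  rw [hterm, mul_right_comm, div_mul_cancel₀ _ (mul_ne_zero hne₁ hne₂)]

lemma saalschutzTerm_wz (hq : ∀ n, qp q q n ≠ 0) (hb : ∀ n, qp q (z * x * y) n ≠ 0)
    {κ j : ℕ} (hj : j ≤ κ) :
    (1 - q * q ^ κ) * (1 - z * x * y * q ^ κ) * saalschutzTerm q x y z (κ + 1) j =
      (1 - z * x * q ^ κ) * (1 - z * y * q ^ κ) * saalschutzTerm q x y z κ j +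
        (saalschutzCert q x y z κ (j + 1) - saalschutzCert q x y z κ j) := by
  have hleft := saalschutzTerm_succ_left (x := x) (y := y) (z := z) hq hj
  cases j with
  | zero =>
    simp only [saalschutzCert, Nat.sub_zero, pow_zero, mul_one] at hleft ⊢
    linear_combination (1 - z * x * y * q ^ κ) * hleft
  | succ m =>
    have hdiag := saalschutzTerm_succ_succ hq hb κ m
    obtain ⟨k, rfl⟩ := Nat.exists_eq_add_of_le hj
    simp only [saalschutzCert, show m + 1 + k - (m + 1) = k by omega,
      show m + 1 + k - m = k + 1 by omega] at hleft ⊢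
    simp only [pow_add, pow_one] at hleft hdiag ⊢
    -- once `hdiag` removes the certificate, what is left is `1 - zxy q^(κ+j)` times `hleft`
    linear_combination (1 - z * x * y * q ^ 2 * q ^ m * q ^ m * q ^ k) * hleft + q * q ^ k * hdiag

lemma saalschutzCert_succ_self (hq : ∀ n, qp q q n ≠ 0) (hb : ∀ n, qp q (z * x * y) n ≠ 0)
    (κ : ℕ) :
    saalschutzCert q x y z κ (κ + 1) =
      -((1 - q * q ^ κ) * (1 - z * x * y * q ^ κ) * saalschutzTerm q x y z (κ + 1) (κ + 1)) := by
  rw [saalschutzCert, Nat.sub_self, pow_zero, mul_one]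
  linear_combination saalschutzTerm_succ_succ hq hb κ κ

lemma sum_saalschutzTerm_succ (hq : ∀ n, qp q q n ≠ 0) (hb : ∀ n, qp q (z * x * y) n ≠ 0)
    (κ : ℕ) :
    (1 - q * q ^ κ) * (1 - z * x * y * q ^ κ) *
        ∑ j ∈ range (κ + 2), saalschutzTerm q x y z (κ + 1) j =
      (1 - z * x * q ^ κ) * (1 - z * y * q ^ κ) *
        ∑ j ∈ range (κ + 1), saalschutzTerm q x y z κ j := by
  have hwz : ∀ j ∈ range (κ + 1),
      (1 - q * q ^ κ) * (1 - z * x * y * q ^ κ) * saalschutzTerm q x y z (κ + 1) j =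
        (1 - z * x * q ^ κ) * (1 - z * y * q ^ κ) * saalschutzTerm q x y z κ j +
          (saalschutzCert q x y z κ (j + 1) - saalschutzCert q x y z κ j) :=
    fun j hj => saalschutzTerm_wz hq hb (Nat.lt_succ_iff.mp (mem_range.mp hj))
  rw [sum_range_succ, mul_add, mul_sum, sum_congr rfl hwz, sum_add_distrib, sum_range_sub,
    saalschutzCert_succ_self hq hb, saalschutzCert, mul_sum]
  ring

theorem sum_saalschutzTerm (hq : ∀ n, qp q q n ≠ 0) (hb : ∀ n, qp q (z * x * y) n ≠ 0) (κ : ℕ) :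
    ∑ j ∈ range (κ + 1), saalschutzTerm q x y z κ j =
      qp q (z * x) κ * qp q (z * y) κ / (qp q q κ * qp q (z * x * y) κ) := by
  induction κ with
  | zero => simp [saalschutzTerm]
  | succ κ ih =>
    have hD := mul_ne_zero (one_sub_mul_pow_ne_zero_of_qp_ne_zero hq κ)
      (one_sub_mul_pow_ne_zero_of_qp_ne_zero hb κ)
    have hrhs : qp q (z * x) (κ + 1) * qp q (z * y) (κ + 1) /
          (qp q q (κ + 1) * qp q (z * x * y) (κ + 1)) =
        (1 - z * x * q ^ κ) * (1 - z * y * q ^ κ) / ((1 - q * q ^ κ) * (1 - z * x * y * q ^ κ)) *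
          (qp q (z * x) κ * qp q (z * y) κ / (qp q q κ * qp q (z * x * y) κ)) := by
      rw [div_mul_div_comm, qp_succ, qp_succ, qp_succ, qp_succ]
      congr 1 <;> ring
    apply mul_left_cancel₀ hD
    rw [sum_saalschutzTerm_succ hq hb, ih, hrhs, ← mul_assoc, mul_div_cancel₀ _ hD]

end Saalschutz

lemma sum_range_sum_range_succ_comm {R : Type*} [AddCommMonoid R] (f : ℕ → ℕ → R) (n : ℕ) :
    ∑ L ∈ range n, ∑ i ∈ range (L + 1), f L i =
      ∑ i ∈ range n, ∑ j ∈ range (n - i), f (i + j) i := by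
  rw [← sum_range_diag_flip]
  refine sum_congr rfl fun L _ => sum_congr rfl fun i hi => ?_
  rw [Nat.add_sub_cancel' (Nat.lt_succ_iff.mp (mem_range.mp hi))]

lemma bailey_inner_sum (q a ρ₁ ρ₂ : ℂ) (hq : ∀ n, qp q q n ≠ 0) (haq : ∀ n, qp q (a * q) n ≠ 0)
    (hρ₁ : ρ₁ ≠ 0) (hρ₂ : ρ₂ ≠ 0)
    (h₁ : ∀ n, qp q (a * q / ρ₁) n ≠ 0) (h₂ : ∀ n, qp q (a * q / ρ₂) n ≠ 0)
    {i M : ℕ} (hi : i ≤ M) :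
    ∑ j ∈ range (M + 1 - i),
        qp q ρ₁ (i + j) * qp q ρ₂ (i + j) * (a * q / (ρ₁ * ρ₂)) ^ (i + j) *
          qp q (a * q / (ρ₁ * ρ₂)) (M - (i + j)) /
          (qp q (a * q / ρ₁) M * qp q (a * q / ρ₂) M * qp q q (M - (i + j))) /
          (qp q q j * qp q (a * q) (2 * i + j)) =
      qp q ρ₁ i * qp q ρ₂ i * (a * q / (ρ₁ * ρ₂)) ^ i /
          (qp q (a * q / ρ₁) i * qp q (a * q / ρ₂) i) /
        (qp q q (M - i) * qp q (a * q) (M + i)) := by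
  obtain ⟨κ, rfl⟩ := Nat.exists_eq_add_of_le hi
  set c := a * q / (ρ₁ * ρ₂)
  have hcxy : c * (ρ₁ * q ^ i) * (ρ₂ * q ^ i) = a * q * q ^ (2 * i) := by
    simp only [c]; field_simp; ring
  have hcx : c * (ρ₁ * q ^ i) = a * q / ρ₂ * q ^ i := by simp only [c]; field_simp
  have hcy : c * (ρ₂ * q ^ i) = a * q / ρ₁ * q ^ i := by simp only [c]; field_simp
  have hterm : ∀ j ∈ range (κ + 1),
      qp q ρ₁ (i + j) * qp q ρ₂ (i + j) * c ^ (i + j) * qp q c (i + κ - (i + j)) /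
          (qp q (a * q / ρ₁) (i + κ) * qp q (a * q / ρ₂) (i + κ) * qp q q (i + κ - (i + j))) /
          (qp q q j * qp q (a * q) (2 * i + j)) =
        qp q ρ₁ i * qp q ρ₂ i * c ^ i /
            (qp q (a * q / ρ₁) (i + κ) * qp q (a * q / ρ₂) (i + κ) * qp q (a * q) (2 * i)) *
          saalschutzTerm q (ρ₁ * q ^ i) (ρ₂ * q ^ i) c κ j := by
    intro j _
    rw [saalschutzTerm, hcxy, Nat.add_sub_add_left, qp_add q ρ₁, qp_add q ρ₂, qp_add q (a * q),
      pow_add]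
    ring
  rw [Nat.add_sub_cancel_left, show i + κ + 1 - i = κ + 1 by omega, sum_congr rfl hterm,
    ← mul_sum, sum_saalschutzTerm hq (hcxy ▸ qp_mul_pow_ne_zero haq (2 * i)), hcxy, hcx, hcy,
    show i + κ + i = 2 * i + κ by ring, qp_add q (a * q / ρ₁), qp_add q (a * q / ρ₂),
    qp_add q (a * q)]
  have hA := qp_mul_pow_ne_zero h₁ i κ
  have hB := qp_mul_pow_ne_zero h₂ i κ
  have hE := qp_mul_pow_ne_zero haq (2 * i) κ
  rw [div_mul_div_comm, div_div, div_eq_div_iff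
    (by simp [h₁, h₂, hq, haq, hA, hB, hE]) (by simp [h₁, h₂, hq, haq, hE])]
  ring

/-- Bailey's lemma in its finite (polynomial) form with free parameters $\rho_1,\rho_2$. -/
theorem bailey_lemma_finite (q a ρ₁ ρ₂ : ℂ) (α β : ℕ → ℂ)
    (hBP : ∀ L, β L = ∑ i ∈ Finset.range (L + 1),
      α i / (qp q q (L - i) * qp q (a * q) (L + i)))
    (hq0 : ∀ n : ℕ, qp q q n ≠ 0)
    (haq : ∀ n : ℕ, qp q (a * q) n ≠ 0)
    (hρ₁ : ρ₁ ≠ 0) (hρ₂ : ρ₂ ≠ 0)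
    (h₁ : ∀ n : ℕ, qp q (a * q / ρ₁) n ≠ 0)
    (h₂ : ∀ n : ℕ, qp q (a * q / ρ₂) n ≠ 0)
    (M : ℕ) :
    ∑ L ∈ Finset.range (M + 1),
        qp q ρ₁ L * qp q ρ₂ L * (a * q / (ρ₁ * ρ₂)) ^ L /
          (qp q (a * q / ρ₁) L * qp q (a * q / ρ₂) L) *
        (α L / (qp q q (M - L) * qp q (a * q) (M + L)))
      = ∑ L ∈ Finset.range (M + 1),
        qp q ρ₁ L * qp q ρ₂ L * (a * q / (ρ₁ * ρ₂)) ^ L * qp q (a * q / (ρ₁ * ρ₂)) (M - L) /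
          (qp q (a * q / ρ₁) M * qp q (a * q / ρ₂) M * qp q q (M - L)) * β L := by
  set w : ℕ → ℂ := fun L => qp q ρ₁ L * qp q ρ₂ L * (a * q / (ρ₁ * ρ₂)) ^ L *
    qp q (a * q / (ρ₁ * ρ₂)) (M - L) / (qp q (a * q / ρ₁) M * qp q (a * q / ρ₂) M * qp q q (M - L))
  calc _ = ∑ i ∈ range (M + 1), ∑ j ∈ range (M + 1 - i),
        w (i + j) * (α i / (qp q q (i + j - i) * qp q (a * q) (i + j + i))) := by
        refine sum_congr rfl fun i hi => ?_
        have hiM := Nat.lt_succ_iff.mp (mem_range.mp hi)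
        rw [mul_div_assoc', mul_div_right_comm,
          ← bailey_inner_sum q a ρ₁ ρ₂ hq0 haq hρ₁ hρ₂ h₁ h₂ hiM, sum_mul]
        refine sum_congr rfl fun j _ => ?_
        rw [Nat.add_sub_cancel_left, show i + j + i = 2 * i + j by ring]
        ring
    _ = ∑ L ∈ range (M + 1), ∑ i ∈ range (L + 1),
        w L * (α i / (qp q q (L - i) * qp q (a * q) (L + i))) :=
      (sum_range_sum_range_succ_comm
        (fun L i => w L * (α i / (qp q q (L - i) * qp q (a * q) (L + i)))) (M + 1)).symm
    _ = _ := by simp only [hBP, mul_sum, w]
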